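/- (Theorem 1, comparison with the clipped double estimator) For every K with 1 ≤ K ≤ N, E[min{μ̂^B_{a_K*}, μ̂*_SE}] ≥ E[μ̂*_CDE]; i.e., the action candidate based clipped double estimator with any number of candidates has expected value at least that of the clipped double estimator. -/

import Mathlib

open MeasureTheory ProbabilityTheory Finset

noncomputable section

/-- The (random) set `M_K` of indices whose `B`-value is among the `K` largest values
among `B 1 ω, …, B N ω`: an index belongs to it iff fewer than `K` indices have a
strictly larger `B`-value. -/
def topK {Ω : Type*} {N : ℕ} (B : Fin N → Ω → ℝ) (K : ℕ) (ω : Ω) : Finset (Fin N) :=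
  Finset.univ.filter fun i => (Finset.univ.filter fun j => B i ω < B j ω).card < K

/-- An element of the finite set `s` at which `f` is maximal over `s`. -/
def argmaxOn {α : Type*} [Nonempty α] (f : α → ℝ) (s : Finset α) : α :=
  if h : s.Nonempty then (s.exists_max_image f h).choose else Classical.arbitrary α

/-- `a_K*`: the index of `M_K` at which `i ↦ A i ω` is maximal over `M_K`. -/
def aK {Ω : Type*} {N : ℕ} [NeZero N] (A B : Fin N → Ω → ℝ) (K : ℕ) (ω : Ω) : Fin N :=
  argmaxOn (fun i => A i ω) (topK B K ω)

/-- `a*`: the index at which `i ↦ A i ω` is maximal over all indices. -/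
def aStar {Ω : Type*} {N : ℕ} [NeZero N] (A : Fin N → Ω → ℝ) (ω : Ω) : Fin N :=
  argmaxOn (fun i => A i ω) Finset.univ

/-- The pointwise maximum `max_{1 ≤ i ≤ N} C i ω` (e.g. the single estimator `μ̂*_SE`). -/
def maxOf {Ω : Type*} {N : ℕ} [NeZero N] (C : Fin N → Ω → ℝ) (ω : Ω) : ℝ :=
  Finset.univ.sup' Finset.univ_nonempty fun i => C i ω

/-- `a_(j)`: the index carrying the `j`-th largest value among `B 1 ω, …, B N ω`
(exactly `j - 1` indices have a strictly larger value). -/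
def rankIdx {Ω : Type*} {N : ℕ} [NeZero N] (B : Fin N → Ω → ℝ) (j : ℕ) (ω : Ω) : Fin N :=
  if h : ∃ i, (Finset.univ.filter fun k => B i ω < B k ω).card = j - 1 then h.choose
  else Classical.arbitrary (Fin N)

open scoped Classical in
/-- A measurable stand-in for `ω ↦ B (aK A B K ω) ω`. -/
def Fk {Ω : Type*} {N : ℕ} (A B : Fin N → Ω → ℝ) (K : ℕ) (ω : Ω) : ℝ :=
  ∑ i : Fin N, if i ∈ topK B K ω ∧ ∀ j ∈ topK B K ω, A j ω ≤ A i ω then B i ω else 0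

end

section AuxLemmas

variable {Ω : Type*} {N : ℕ} [NeZero N]

lemma mem_topK_iff {B : Fin N → Ω → ℝ} {K : ℕ} {ω : Ω} {i : Fin N} :
    i ∈ topK B K ω ↔ (Finset.univ.filter fun j => B i ω < B j ω).card < K := by
  simp [topK]

lemma topK_nonempty (B : Fin N → Ω → ℝ) {K : ℕ} (hK : 1 ≤ K) (ω : Ω) :
    (topK B K ω).Nonempty := by
  obtain ⟨i0, -, hmax⟩ := Finset.exists_max_image Finset.univ (fun i => B i ω)
    Finset.univ_nonempty
  refine ⟨i0, mem_topK_iff.2 ?_⟩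
  have : (Finset.univ.filter fun j => B i0 ω < B j ω) = ∅ := by
    apply Finset.filter_eq_empty_iff.2
    intro j _
    exact not_lt.2 (hmax j (Finset.mem_univ j))
  rw [this]
  simpa using Nat.lt_of_lt_of_le Nat.zero_lt_one hK

lemma argmaxOn_spec {α : Type*} [Nonempty α] (f : α → ℝ) {s : Finset α} (h : s.Nonempty) :
    argmaxOn f s ∈ s ∧ ∀ b ∈ s, f b ≤ f (argmaxOn f s) := by
  rw [argmaxOn, dif_pos h]
  exact (s.exists_max_image f h).choose_spec

lemma topK_N_eq_univ (B : Fin N → Ω → ℝ) (ω : Ω) : topK B N ω = Finset.univ := by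
  ext i
  simp only [mem_topK_iff, Finset.mem_univ, iff_true]
  calc (Finset.univ.filter fun j => B i ω < B j ω).card
      < (Finset.univ : Finset (Fin N)).card := by
        apply Finset.card_lt_card
        refine Finset.ssubset_iff_of_subset (Finset.filter_subset _ _) |>.2 ?_
        exact ⟨i, Finset.mem_univ i, by simp⟩
    _ = N := by simp

lemma aStar_eq_aK_N (A B : Fin N → Ω → ℝ) (ω : Ω) :
    aStar A ω = aK A B N ω := by
  rw [aStar, aK, topK_N_eq_univ]

open scoped Classical in
lemma Fk_eq (A B : Fin N → Ω → ℝ) {K : ℕ} (hK : 1 ≤ K) {ω : Ω}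
    (hinj : Function.Injective fun i => A i ω) :
    Fk A B K ω = B (aK A B K ω) ω := by
  have hne := topK_nonempty B hK ω
  obtain ⟨hmem, hmax⟩ := argmaxOn_spec (fun i => A i ω) hne
  rw [Fk, Finset.sum_eq_single (aK A B K ω)]
  · rw [if_pos ⟨hmem, hmax⟩]
  · intro i _ hi
    rw [if_neg]
    rintro ⟨hmem', hmax'⟩
    exact hi (hinj (le_antisymm (hmax i hmem') (hmax' _ hmem)))
  · intro h; exact absurd (Finset.mem_univ _) h

open scoped Classical in
lemma Fk_measurable {_ : MeasurableSpace Ω} (A B : Fin N → Ω → ℝ)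
    (hA : ∀ i, Measurable (A i)) (hB : ∀ i, Measurable (B i)) (K : ℕ) :
    Measurable (Fk A B K) := by
  apply Finset.measurable_sum
  intro i _
  have hcard : ∀ k : Fin N, Measurable
      (fun ω => (Finset.univ.filter fun j => B k ω < B j ω).card) := by
    intro k
    simp_rw [Finset.card_filter]
    exact Finset.measurable_sum _ fun j _ =>
      Measurable.ite (measurableSet_lt (hB k) (hB j)) measurable_const measurable_const
  have htop : ∀ k : Fin N, MeasurableSet {ω | k ∈ topK B K ω} := by
    intro k
    have : {ω | k ∈ topK B K ω} =
        (fun ω => (Finset.univ.filter fun j => B k ω < B j ω).card) ⁻¹' Set.Iio K := by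
      ext ω; simp [mem_topK_iff, Set.mem_preimage]
    rw [this]
    exact (hcard k) measurableSet_Iio
  have hcond : MeasurableSet
      {ω | i ∈ topK B K ω ∧ ∀ j ∈ topK B K ω, A j ω ≤ A i ω} := by
    apply (htop i).inter
    show MeasurableSet {ω | ∀ j ∈ topK B K ω, A j ω ≤ A i ω}
    have : {ω | ∀ j ∈ topK B K ω, A j ω ≤ A i ω} =
        ⋂ j : Fin N, ({ω | j ∈ topK B K ω}ᶜ ∪ {ω | A j ω ≤ A i ω}) := by
      ext ω
      simp only [Set.mem_setOf_eq, Set.mem_iInter, Set.mem_union, Set.mem_compl_iff]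
      constructor
      · intro h j; by_cases hj : j ∈ topK B K ω
        · exact Or.inr (h j hj)
        · exact Or.inl hj
      · intro h j hj; rcases h j with h' | h'
        · exact absurd hj h'
        · exact h'
    rw [this]
    exact MeasurableSet.iInter fun j =>
      ((htop j).compl).union (measurableSet_le (hA j) (hA i))
  exact Measurable.ite hcond (hB i) measurable_const

open scoped Classical in
lemma Fk_abs_le (A B : Fin N → Ω → ℝ) (K : ℕ) (ω : Ω) :
    |Fk A B K ω| ≤ ∑ i : Fin N, |B i ω| := by
  calc |Fk A B K ω| ≤ ∑ i : Fin N,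
        |if i ∈ topK B K ω ∧ ∀ j ∈ topK B K ω, A j ω ≤ A i ω then B i ω else 0| :=
      Finset.abs_sum_le_sum_abs _ _
    _ ≤ ∑ i : Fin N, |B i ω| := by
      apply Finset.sum_le_sum
      intro i _
      split
      · exact le_rfl
      · simp [abs_nonneg]

lemma maxOf_measurable {_ : MeasurableSpace Ω} (C : Fin N → Ω → ℝ)
    (hC : ∀ i, Measurable (C i)) : Measurable (maxOf C) := by
  have h : Measurable (Finset.univ.sup' Finset.univ_nonempty C) :=
    Finset.measurable_sup' _ fun i _ => hC i
  have heq : maxOf C = Finset.univ.sup' Finset.univ_nonempty C := by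
    ext ω; simp [maxOf, Finset.sup'_apply]
  rw [heq]; exact h

lemma maxOf_abs_le (C : Fin N → Ω → ℝ) (ω : Ω) :
    |maxOf C ω| ≤ ∑ i : Fin N, |C i ω| := by
  obtain ⟨i, -, hi⟩ := Finset.exists_mem_eq_sup' (Finset.univ_nonempty (α := Fin N))
    fun i => C i ω
  rw [maxOf, hi]
  calc |C i ω| ≤ ∑ j : Fin N, |C j ω| :=
    Finset.single_le_sum (f := fun j => |C j ω|) (fun j _ => abs_nonneg _) (Finset.mem_univ i)

/-- Key pointwise inequality: `B (aStar A ω) ω ≤ B (aK A B K ω) ω` when `A ·ω` is injective. -/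
lemma key_ineq (A B : Fin N → Ω → ℝ) {K : ℕ} (hK : 1 ≤ K) (ω : Ω)
    (hinj : Function.Injective fun i => A i ω) :
    B (aStar A ω) ω ≤ B (aK A B K ω) ω := by
  set a := aStar A ω with ha
  set b := aK A B K ω with hb
  have hne := topK_nonempty B hK ω
  obtain ⟨hbmem, hbmax⟩ := argmaxOn_spec (fun i => A i ω) hne
  obtain ⟨-, hamax⟩ := argmaxOn_spec (fun i => A i ω)
    (Finset.univ_nonempty (α := Fin N))
  by_cases hmem : a ∈ topK B K ω
  · have hab : a = b := hinj (le_antisymm (hbmax a hmem) (hamax b (Finset.mem_univ b)))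
    rw [hab]
  · -- a ∉ topK: K ≤ card{j | B a < B j}; b ∈ topK: card{j | B b < B j} < K.
    by_contra hlt
    push_neg at hlt
    have hsub : (Finset.univ.filter fun j => B a ω < B j ω) ⊆
        (Finset.univ.filter fun j => B b ω < B j ω) := by
      intro j hj
      simp only [Finset.mem_filter, Finset.mem_univ, true_and] at hj ⊢
      exact lt_of_le_of_lt (le_of_lt hlt) hj
    have h1 : K ≤ (Finset.univ.filter fun j => B a ω < B j ω).card := by
      by_contra h
      exact hmem (mem_topK_iff.2 (lt_of_not_ge h))
    have h2 := mem_topK_iff.1 hbmem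
    exact absurd (lt_of_le_of_lt (h1.trans (Finset.card_le_card hsub)) h2) (lt_irrefl K)

end AuxLemmas

theorem stmt7 {Ω : Type*} [MeasurableSpace Ω] (P : MeasureTheory.Measure Ω)
    [MeasureTheory.IsProbabilityMeasure P]
    (N : ℕ) [NeZero N] (hN : 2 ≤ N)
    (A B C : Fin N → Ω → ℝ)
    (hAmeas : ∀ i, Measurable (A i)) (hBmeas : ∀ i, Measurable (B i))
    (hCmeas : ∀ i, Measurable (C i))
    (hAint : ∀ i, MeasureTheory.Integrable (A i) P)
    (hBint : ∀ i, MeasureTheory.Integrable (B i) P)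
    (hCint : ∀ i, MeasureTheory.Integrable (C i) P)
    (hAdist : ∀ᵐ ω ∂P, Function.Injective fun i => A i ω)
    (hBdist : ∀ᵐ ω ∂P, Function.Injective fun i => B i ω)
    :
    ∀ K, 1 ≤ K → K ≤ N →
      ∫ ω, min (B (aStar A ω) ω) (maxOf C ω) ∂P ≤
        ∫ ω, min (B (aK A B K ω) ω) (maxOf C ω) ∂P := by
  intro K hK1 hKN
  have hN1 : 1 ≤ N := le_trans (by norm_num) hN
  -- integrable dominating function
  have hdom : Integrable (fun ω => (∑ i : Fin N, |B i ω|) + ∑ i : Fin N, |C i ω|) P := by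
    apply Integrable.add <;>
      exact integrable_finset_sum _ fun i _ => (by first
        | exact (hBint i).abs
        | exact (hCint i).abs)
  have hint : ∀ K' : ℕ, Integrable (fun ω => min (Fk A B K' ω) (maxOf C ω)) P := by
    intro K'
    apply Integrable.mono' hdom
    · exact ((Fk_measurable A B hAmeas hBmeas K').min
        (maxOf_measurable C hCmeas)).aestronglyMeasurable
    · filter_upwards with ω
      have h1 := Fk_abs_le A B K' ω
      have h2 := maxOf_abs_le C ω
      have : |min (Fk A B K' ω) (maxOf C ω)| ≤ max |Fk A B K' ω| |maxOf C ω| :=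
        abs_min_le_max_abs_abs
      calc ‖min (Fk A B K' ω) (maxOf C ω)‖ ≤ max |Fk A B K' ω| |maxOf C ω| := this
        _ ≤ (∑ i : Fin N, |B i ω|) + ∑ i : Fin N, |C i ω| :=
          max_le (h1.trans (le_add_of_nonneg_right (Finset.sum_nonneg fun i _ => abs_nonneg _)))
            (h2.trans (le_add_of_nonneg_left (Finset.sum_nonneg fun i _ => abs_nonneg _)))
  have hcongrK : (fun ω => min (B (aK A B K ω) ω) (maxOf C ω)) =ᵐ[P]
      (fun ω => min (Fk A B K ω) (maxOf C ω)) := by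
    filter_upwards [hAdist] with ω hinj
    rw [Fk_eq A B hK1 hinj]
  have hcongrN : (fun ω => min (B (aStar A ω) ω) (maxOf C ω)) =ᵐ[P]
      (fun ω => min (Fk A B N ω) (maxOf C ω)) := by
    filter_upwards [hAdist] with ω hinj
    rw [Fk_eq A B hN1 hinj, aStar_eq_aK_N A B ω]
  have hle : (fun ω => min (Fk A B N ω) (maxOf C ω)) ≤ᵐ[P]
      (fun ω => min (Fk A B K ω) (maxOf C ω)) := by
    filter_upwards [hAdist] with ω hinj
    rw [Fk_eq A B hK1 hinj, Fk_eq A B hN1 hinj, ← aStar_eq_aK_N A B ω]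
    exact min_le_min (key_ineq A B hK1 ω hinj) le_rfl
  calc ∫ ω, min (B (aStar A ω) ω) (maxOf C ω) ∂P
      = ∫ ω, min (Fk A B N ω) (maxOf C ω) ∂P := integral_congr_ae hcongrN
    _ ≤ ∫ ω, min (Fk A B K ω) (maxOf C ω) ∂P := integral_mono_ae (hint N) (hint K) hle
    _ = ∫ ω, min (B (aK A B K ω) ω) (maxOf C ω) ∂P := (integral_congr_ae hcongrK).symm
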